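/- arXiv:1009.5530 — 4 statements merged into one kernel-verified Lean document; each statement's English description precedes it below -/
import Mathlib

section
/- Let V be a finite-dimensional real vector space and let P, Q, P', Q' be covectors in V*. If the symmetric 2-tensor X defined by X(u,v) = P(u)Q(v) + P(v)Q(u) is nonzero and equals P'(u)Q'(v) + P'(v)Q'(u), then {P', Q'} spans the same 2-dimensional (or 1-dimensional) subspace of V* as {P, Q}; more precisely, either P' = αP and Q' = α^{-1}Q + βP for some scalars, or P' and Q' are obtained from P and Q by swapping and rescaling. In particular, a nonzero simple symmetric tensor P⊗Q + Q⊗P determines its factors P and Q up to scale and order. -/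
private lemma aux_prop {V : Type*} [AddCommGroup V] [Module ℝ V]
    (P Q : Module.Dual ℝ V) (e : V) (he : P e = 1)
    (h : ∀ v, P v = 0 → Q v = 0) : Q = (Q e) • P := by
  ext v
  have h1 : P (v - P v • e) = 0 := by simp [he]
  have h2 := h _ h1
  simp only [map_sub, map_smul, smul_eq_mul, LinearMap.smul_apply, sub_eq_zero] at h2 ⊢
  rw [h2]; ring

private lemma aux_span {V : Type*} [AddCommGroup V] [Module ℝ V]
    (P Q : Module.Dual ℝ V) (α : ℝ) (hα : α ≠ 0) :
    Submodule.span ℝ ({α • P, α⁻¹ • Q} : Set (Module.Dual ℝ V)) =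
      Submodule.span ℝ ({P, Q} : Set (Module.Dual ℝ V)) := by
  apply Submodule.span_eq_span
  · rintro x hx
    rcases hx with rfl | rfl
    · exact Submodule.smul_mem _ _ (Submodule.subset_span (by simp))
    · exact Submodule.smul_mem _ _ (Submodule.subset_span (by simp))
  · rintro x hx
    rcases hx with rfl | rfl
    · have hmem := Submodule.smul_mem (Submodule.span ℝ ({α • x, α⁻¹ • Q} : Set (Module.Dual ℝ V)))
        α⁻¹ (Submodule.subset_span (by simp : α • x ∈ ({α • x, α⁻¹ • Q} : Set (Module.Dual ℝ V))))
      rwa [smul_smul, inv_mul_cancel₀ hα, one_smul] at hmem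
    · have hmem := Submodule.smul_mem (Submodule.span ℝ ({α • P, α⁻¹ • x} : Set (Module.Dual ℝ V)))
        α (Submodule.subset_span (by simp : α⁻¹ • x ∈ ({α • P, α⁻¹ • x} : Set (Module.Dual ℝ V))))
      rwa [smul_smul, mul_inv_cancel₀ hα, one_smul] at hmem

/-- A nonzero simple symmetric 2-tensor `P⊗Q + Q⊗P` on a finite-dimensional real vector
space determines its factors up to scale and order; in particular `{P', Q'}` spans the same
subspace of the dual as `{P, Q}`. -/
theorem stmt_0 (V : Type*) [AddCommGroup V] [Module ℝ V] [FiniteDimensional ℝ V]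
    (P Q P' Q' : Module.Dual ℝ V)
    (hX : ∃ u v : V, P u * Q v + P v * Q u ≠ 0)
    (heq : ∀ u v : V, P u * Q v + P v * Q u = P' u * Q' v + P' v * Q' u) :
    Submodule.span ℝ ({P', Q'} : Set (Module.Dual ℝ V)) =
      Submodule.span ℝ ({P, Q} : Set (Module.Dual ℝ V)) ∧
    ((∃ α β : ℝ, α ≠ 0 ∧ P' = α • P ∧ Q' = α⁻¹ • Q + β • P) ∨
     (∃ α β : ℝ, α ≠ 0 ∧ P' = α • Q ∧ Q' = α⁻¹ • P + β • Q)) := by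
  obtain ⟨u, v, hXuv⟩ := hX
  -- main claim: exact proportionality with β = 0
  have key : (∃ α : ℝ, α ≠ 0 ∧ P' = α • P ∧ Q' = α⁻¹ • Q) ∨
      (∃ α : ℝ, α ≠ 0 ∧ P' = α • Q ∧ Q' = α⁻¹ • P) := by
    by_cases hdep : ∃ c : ℝ, Q = c • P
    · -- dependent case
      obtain ⟨c, rfl⟩ := hdep
      simp only [LinearMap.smul_apply, smul_eq_mul] at hXuv heq
      have hc : c ≠ 0 := by rintro rfl; simp at hXuv
      have hPu : P u ≠ 0 := by intro h; apply hXuv; rw [h]; ring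
      set u₀ : V := (P u)⁻¹ • u with hu₀
      have hPu₀ : P u₀ = 1 := by rw [hu₀, map_smul, smul_eq_mul, inv_mul_cancel₀ hPu]
      have hab : P' u₀ * Q' u₀ = c := by
        have := heq u₀ u₀
        rw [hPu₀] at this
        nlinarith [this]
      have ha : P' u₀ ≠ 0 := fun h => hc (by rw [← hab, h]; ring)
      have hb : Q' u₀ ≠ 0 := fun h => hc (by rw [← hab, h]; ring)
      have hker : ∀ w, P w = 0 → P' w = 0 ∧ Q' w = 0 := by
        intro w hw
        have e1 := heq u₀ w
        have e2 := heq w w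
        rw [hPu₀] at e1
        rw [hw] at e1 e2
        have e1' : P' u₀ * Q' w + P' w * Q' u₀ = 0 := by linarith
        have e2' : P' w * Q' w = 0 := by nlinarith
        rcases mul_eq_zero.1 e2' with h1 | h1
        · refine ⟨h1, ?_⟩
          have : P' u₀ * Q' w = 0 := by rw [h1] at e1'; linarith
          exact (mul_eq_zero.1 this).resolve_left ha
        · have hPw : P' w * Q' u₀ = 0 := by rw [h1] at e1'; linarith
          exact ⟨(mul_eq_zero.1 hPw).resolve_right hb, h1⟩
      have hP' : P' = (P' u₀) • P := aux_prop P P' u₀ hPu₀ (fun w hw => (hker w hw).1)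
      have hQ' : Q' = (Q' u₀) • P := aux_prop P Q' u₀ hPu₀ (fun w hw => (hker w hw).2)
      left
      refine ⟨P' u₀, ha, hP', ?_⟩
      rw [hQ']
      have hQu : Q' u₀ = (P' u₀)⁻¹ * c := by field_simp; linarith [hab]
      ext w
      simp only [LinearMap.smul_apply, smul_eq_mul]
      rw [hQu]; ring
    · -- independent case
      have hP : P ≠ 0 := by rintro rfl; simp at hXuv
      have hQ : Q ≠ 0 := by rintro rfl; simp at hXuv
      -- find v₁ with P v₁ = 0, Q v₁ ≠ 0
      have hv1 : ∃ w, P w = 0 ∧ Q w ≠ 0 := by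
        by_contra h
        push_neg at h
        obtain ⟨e, he⟩ : ∃ e, P e ≠ 0 := by
          by_contra h'; push_neg at h'; exact hP (by ext w; simp [h' w])
        have he1 : P ((P e)⁻¹ • e) = 1 := by rw [map_smul, smul_eq_mul, inv_mul_cancel₀ he]
        exact hdep ⟨Q ((P e)⁻¹ • e), aux_prop P Q _ he1 h⟩
      have hu1 : ∃ w, Q w = 0 ∧ P w ≠ 0 := by
        by_contra h
        push_neg at h
        obtain ⟨e, he⟩ : ∃ e, Q e ≠ 0 := by
          by_contra h'; push_neg at h'; exact hQ (by ext w; simp [h' w])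
        have he1 : Q ((Q e)⁻¹ • e) = 1 := by rw [map_smul, smul_eq_mul, inv_mul_cancel₀ he]
        have := aux_prop Q P _ he1 h
        set d := P ((Q e)⁻¹ • e)
        have hd : d ≠ 0 := by
          rintro h0; rw [h0, zero_smul] at this; exact hP this
        exact hdep ⟨d⁻¹, by rw [this, smul_smul, inv_mul_cancel₀ hd, one_smul]⟩
      obtain ⟨w1, hw1P, hw1Q⟩ := hv1
      obtain ⟨w2, hw2Q, hw2P⟩ := hu1
      set v₀ : V := (Q w1)⁻¹ • w1 with hv₀def
      set u₀ : V := (P w2)⁻¹ • w2 with hu₀def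
      have hPv₀ : P v₀ = 0 := by rw [hv₀def, map_smul, smul_eq_mul, hw1P, mul_zero]
      have hQv₀ : Q v₀ = 1 := by rw [hv₀def, map_smul, smul_eq_mul, inv_mul_cancel₀ hw1Q]
      have hPu₀ : P u₀ = 1 := by rw [hu₀def, map_smul, smul_eq_mul, inv_mul_cancel₀ hw2P]
      have hQu₀ : Q u₀ = 0 := by rw [hu₀def, map_smul, smul_eq_mul, hw2Q, mul_zero]
      have h00 : P' u₀ * Q' u₀ = 0 := by
        have := heq u₀ u₀; rw [hPu₀, hQu₀] at this; nlinarith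
      have h11 : P' v₀ * Q' v₀ = 0 := by
        have := heq v₀ v₀; rw [hPv₀, hQv₀] at this; nlinarith
      have h01 : P' u₀ * Q' v₀ + P' v₀ * Q' u₀ = 1 := by
        have := heq u₀ v₀; rw [hPu₀, hQu₀, hPv₀, hQv₀] at this; linarith
      have hq : ∀ x, Q x = P' u₀ * Q' x + P' x * Q' u₀ := by
        intro x
        have := heq u₀ x; rw [hPu₀, hQu₀] at this; linarith
      have hp : ∀ x, P x = P' v₀ * Q' x + P' x * Q' v₀ := by
        intro x
        have := heq v₀ x; rw [hPv₀, hQv₀] at this; linarith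
      by_cases hc : P' u₀ = 0
      · -- swapped case
        have h01' : P' v₀ * Q' u₀ = 1 := by rw [hc] at h01; linarith
        have hQ'u₀ : Q' u₀ ≠ 0 := fun h => by rw [h, mul_zero] at h01'; linarith
        have hP'v₀ : P' v₀ ≠ 0 := fun h => by rw [h, zero_mul] at h01'; linarith
        have hQ'v₀ : Q' v₀ = 0 := (mul_eq_zero.1 h11).resolve_left hP'v₀
        have hQeq : Q = (Q' u₀) • P' := by
          ext x; simp only [LinearMap.smul_apply, smul_eq_mul]
          rw [hq x, hc]; ring
        have hPeq : P = (P' v₀) • Q' := by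
          ext x; simp only [LinearMap.smul_apply, smul_eq_mul]
          rw [hp x, hQ'v₀]; ring
        right
        refine ⟨(Q' u₀)⁻¹, inv_ne_zero hQ'u₀, ?_, ?_⟩
        · rw [hQeq, smul_smul, inv_mul_cancel₀ hQ'u₀, one_smul]
        · rw [inv_inv, hPeq, smul_smul]
          have : Q' u₀ * P' v₀ = 1 := by linarith
          rw [this, one_smul]
      · have hQ'u₀ : Q' u₀ = 0 := (mul_eq_zero.1 h00).resolve_left hc
        have h01' : P' u₀ * Q' v₀ = 1 := by rw [hQ'u₀] at h01; linarith
        have hQ'v₀ : Q' v₀ ≠ 0 := fun h => by rw [h, mul_zero] at h01'; linarith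
        have hP'v₀ : P' v₀ = 0 := (mul_eq_zero.1 h11).resolve_right hQ'v₀
        have hQeq : Q = (P' u₀) • Q' := by
          ext x; simp only [LinearMap.smul_apply, smul_eq_mul]
          rw [hq x, hQ'u₀]; ring
        have hPeq : P = (Q' v₀) • P' := by
          ext x; simp only [LinearMap.smul_apply, smul_eq_mul]
          rw [hp x, hP'v₀]; ring
        left
        refine ⟨(Q' v₀)⁻¹, inv_ne_zero hQ'v₀, ?_, ?_⟩
        · rw [hPeq, smul_smul, inv_mul_cancel₀ hQ'v₀, one_smul]
        · rw [inv_inv, hQeq, smul_smul]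
          have : Q' v₀ * P' u₀ = 1 := by linarith
          rw [this, one_smul]
  rcases key with ⟨α, hα, h1, h2⟩ | ⟨α, hα, h1, h2⟩
  · constructor
    · rw [h1, h2]; exact aux_span P Q α hα
    · left; exact ⟨α, 0, hα, h1, by rw [h2, zero_smul, add_zero]⟩
  · constructor
    · rw [h1, h2, Set.pair_comm P Q]
      exact aux_span Q P α hα
    · right; exact ⟨α, 0, hα, h1, by rw [h2, zero_smul, add_zero]⟩
end

section
/- Let (M^{2n}, g, J) be a Kähler manifold of dimension 2n ≥ 4 and let (a_{ij}, λ_i) be a solution of the h-projective equation a_{ij,k} = λ_i g_{jk} + λ_j g_{ik} − λ̄_i J_{jk} − λ̄_j J_{ik}. Then the covariant Hessian λ_{i,j} satisfies J^α_i λ_{α,j} = − λ_{i,α} J^α_j; equivalently, λ_{i,j} is hermitian, i.e. invariant under J: λ_{i,j}(JX, JY) = λ_{i,j}(X, Y). -/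
open Matrix Finset

theorem key_aux {m : ℕ} (hm : 4 ≤ m) (G Gi Jm Hm : Matrix (Fin m) (Fin m) ℝ)
    (hGsym : Gᵀ = G) (hGiG : Gi * G = 1) (hJ2 : Jm * Jm = -1)
    (hJGJ : Jmᵀ * G * Jm = G) (hHsym : Hmᵀ = Hm)
    (hE : ∀ i j k l : Fin m,
      (Jmᵀ*Hm*Jm - Hm) i l * G j k - (Jmᵀ*Hm*Jm - Hm) i k * G j l
      + (Jmᵀ*Hm*Jm - Hm) j l * G i k - (Jmᵀ*Hm*Jm - Hm) j k * G i l
      + (Hm*Jm + Jmᵀ*Hm) i l * (G*Jm) j k - (Hm*Jm + Jmᵀ*Hm) i k * (G*Jm) j l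
      + (Hm*Jm + Jmᵀ*Hm) j l * (G*Jm) i k - (Hm*Jm + Jmᵀ*Hm) j k * (G*Jm) i l = 0) :
    Hm * Jm + Jmᵀ * Hm = 0 := by
  set P : Matrix (Fin m) (Fin m) ℝ := Jmᵀ*Hm*Jm - Hm with hPdef
  set Q : Matrix (Fin m) (Fin m) ℝ := Hm*Jm + Jmᵀ*Hm with hQdef
  set K : Matrix (Fin m) (Fin m) ℝ := G*Jm with hKdef
  -- basic matrix facts
  have hGGi : G * Gi = 1 := mul_eq_one_comm.mp hGiG
  have hGinv : G⁻¹ = Gi := Matrix.inv_eq_left_inv hGiG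
  have hGisym : Giᵀ = Gi := by
    rw [← hGinv, Matrix.transpose_nonsing_inv, hGsym]
  have hJTG : Jmᵀ * G = -(G * Jm) := by
    have h := congrArg (· * Jm) hJGJ
    simp only [Matrix.mul_assoc, hJ2] at h
    have : -(Jmᵀ * G) = G * Jm := by
      calc -(Jmᵀ * G) = Jmᵀ * (G * -1) := by
            simp [Matrix.mul_neg, Matrix.mul_one, Matrix.mul_assoc]
        _ = G * Jm := h
    linear_combination (norm := noncomm_ring) -this
  have hJT : Jmᵀ = -(K * Gi) := by
    have h := congrArg (· * Gi) hJTG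
    try simp only at h
    rw [Matrix.mul_assoc, hGGi, Matrix.mul_one] at h
    rw [h, Matrix.neg_mul, Matrix.mul_assoc]
  have hKGi : K * Gi = -Jmᵀ := by rw [hJT]; simp
  have hGiK : Gi * K = Jm := by rw [hKdef, ← Matrix.mul_assoc, hGiG, Matrix.one_mul]
  have hJTK : Jmᵀ * K = G := by rw [hKdef, ← Matrix.mul_assoc, hJGJ]
  have hJT2 : Jmᵀ * Jmᵀ = -1 := by
    have := congrArg Matrix.transpose hJ2
    simpa [Matrix.transpose_mul] using this
  have hJTQ : Jmᵀ * Q = P := by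
    rw [hQdef, hPdef, Matrix.mul_add, ← Matrix.mul_assoc, ← Matrix.mul_assoc, hJT2]
    simp [Matrix.mul_assoc, sub_eq_add_neg]
  have hQsym : Qᵀ = Q := by
    rw [hQdef, Matrix.transpose_add, Matrix.transpose_mul, Matrix.transpose_mul,
      Matrix.transpose_transpose, hHsym]
    exact add_comm _ _
  have hPsym : Pᵀ = P := by
    simp [hPdef, Matrix.transpose_sub, Matrix.transpose_mul, hHsym, Matrix.mul_assoc]
  have hKasym : Kᵀ = -K := by
    rw [hKdef, Matrix.transpose_mul, hGsym, hJTG]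
  have htrJ : Matrix.trace Jm = 0 := by
    have h1 : Matrix.trace Jmᵀ = Matrix.trace Jm := Matrix.trace_transpose Jm
    have h2 : Matrix.trace (-(K * Gi)) = -Matrix.trace Jm := by
      rw [Matrix.trace_neg, Matrix.trace_mul_comm, hGiK]
    rw [hJT, h2] at h1
    linarith
  -- entrywise helpers
  have egGs : ∀ a b, G a b = G b a := fun a b => by
    have := congrFun (congrFun hGsym a) b
    simpa [Matrix.transpose_apply] using this.symm
  have egGis : ∀ a b, Gi a b = Gi b a := fun a b => by
    have := congrFun (congrFun hGisym a) b
    simpa [Matrix.transpose_apply] using this.symm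
  have egPs : ∀ a b, P a b = P b a := fun a b => by
    have := congrFun (congrFun hPsym a) b
    simpa [Matrix.transpose_apply] using this.symm
  have egQs : ∀ a b, Q a b = Q b a := fun a b => by
    have := congrFun (congrFun hQsym a) b
    simpa [Matrix.transpose_apply] using this.symm
  have egGiG : ∀ a b, (∑ k, Gi a k * G k b) = if a = b then (1:ℝ) else 0 := by
    intro a b
    have := congrFun (congrFun hGiG a) b
    simpa [Matrix.mul_apply, Matrix.one_apply] using this
  have egGGi : ∀ a b, (∑ k, G a k * Gi k b) = if a = b then (1:ℝ) else 0 := by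
    intro a b
    have := congrFun (congrFun hGGi a) b
    simpa [Matrix.mul_apply, Matrix.one_apply] using this
  have egGiK : ∀ a b, (∑ k, Gi a k * K k b) = Jm a b := by
    intro a b
    have := congrFun (congrFun hGiK a) b
    simpa [Matrix.mul_apply] using this
  have egKGi : ∀ a b, (∑ k, K a k * Gi k b) = -(Jm b a) := by
    intro a b
    have := congrFun (congrFun hKGi a) b
    simpa [Matrix.mul_apply, Matrix.transpose_apply] using this
  have egJTQ : ∀ a b, (∑ k, Jm k a * Q k b) = P a b := by
    intro a b
    have := congrFun (congrFun hJTQ a) b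
    simpa [Matrix.mul_apply, Matrix.transpose_apply] using this
  -- scalars
  set p : ℝ := ∑ j, ∑ k, Gi j k * P j k with hp
  set q : ℝ := ∑ j, ∑ k, Gi j k * Q j k with hq
  -- t = 0
  have ht0 : (∑ j, ∑ k, Gi j k * K j k) = 0 := by
    have h1 : (∑ j, ∑ k, Gi j k * K j k) = Matrix.trace (K * Gi) := by
      rw [Matrix.trace]
      refine Finset.sum_congr rfl fun j _ => ?_
      rw [Matrix.diag_apply, Matrix.mul_apply]
      refine Finset.sum_congr rfl fun k _ => ?_
      rw [egGis j k]; ring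
    rw [h1, hKGi, Matrix.trace_neg, Matrix.trace_transpose, htrJ, neg_zero]
  -- contraction identities
  have ht1 : ∀ (A : Matrix (Fin m) (Fin m) ℝ) (c : ℝ),
      (∑ j, ∑ k, Gi j k * (c * A j k)) = c * (∑ j, ∑ k, Gi j k * A j k) := by
    intro A c
    rw [Finset.mul_sum]
    refine Finset.sum_congr rfl fun j _ => ?_
    rw [Finset.mul_sum]
    exact Finset.sum_congr rfl fun k _ => by ring
  have hGiGtr : (∑ j, ∑ k, Gi j k * G j k) = (m:ℝ) := by
    have h1 : ∀ j, (∑ k, Gi j k * G j k) = (1:ℝ) := by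
      intro j
      calc (∑ k, Gi j k * G j k) = ∑ k, Gi j k * G k j :=
            Finset.sum_congr rfl fun k _ => by rw [egGs j k]
        _ = if j = j then (1:ℝ) else 0 := egGiG j j
        _ = 1 := by simp
    simp [h1]
  -- the eight contracted terms
  have hT1 : ∀ i l : Fin m, (∑ j, ∑ k, Gi j k * (P i l * G j k)) = (m:ℝ) * P i l := by
    intro i l
    rw [ht1 G (P i l), hGiGtr]; ring
  have hT2 : ∀ i l : Fin m, (∑ j, ∑ k, Gi j k * (P i k * G j l)) = P i l := by
    intro i l
    rw [Finset.sum_comm]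
    have h1 : ∀ k, (∑ j, Gi j k * (P i k * G j l)) = P i k * (if k = l then (1:ℝ) else 0) := by
      intro k
      have h2 : (∑ j, Gi j k * (P i k * G j l)) = P i k * ∑ j, Gi k j * G j l := by
        rw [Finset.mul_sum]
        exact Finset.sum_congr rfl fun j _ => by rw [egGis j k]; ring
      rw [h2, egGiG k l]
    calc (∑ k, ∑ j, Gi j k * (P i k * G j l))
        = ∑ k, P i k * (if k = l then (1:ℝ) else 0) := Finset.sum_congr rfl fun k _ => h1 k
      _ = P i l := by simp
  have hT3 : ∀ i l : Fin m, (∑ j, ∑ k, Gi j k * (P j l * G i k)) = P i l := by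
    intro i l
    have h1 : ∀ j, (∑ k, Gi j k * (P j l * G i k)) = P j l * (if i = j then (1:ℝ) else 0) := by
      intro j
      have h2 : (∑ k, Gi j k * (P j l * G i k)) = P j l * ∑ k, G i k * Gi k j := by
        rw [Finset.mul_sum]
        exact Finset.sum_congr rfl fun k _ => by rw [egGis j k]; ring
      rw [h2, egGGi i j]
    calc (∑ j, ∑ k, Gi j k * (P j l * G i k))
        = ∑ j, P j l * (if i = j then (1:ℝ) else 0) := Finset.sum_congr rfl fun j _ => h1 j
      _ = P i l := by simp
  have hT4 : ∀ i l : Fin m, (∑ j, ∑ k, Gi j k * (P j k * G i l)) = p * G i l := by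
    intro i l
    calc (∑ j, ∑ k, Gi j k * (P j k * G i l))
        = ∑ j, (∑ k, Gi j k * P j k) * G i l := by
          refine Finset.sum_congr rfl fun j _ => ?_
          rw [Finset.sum_mul]
          exact Finset.sum_congr rfl fun k _ => by ring
      _ = (∑ j, ∑ k, Gi j k * P j k) * G i l := (Finset.sum_mul _ _ _).symm
      _ = p * G i l := by rw [← hp]
  have hT5 : ∀ i l : Fin m, (∑ j, ∑ k, Gi j k * (Q i l * K j k)) = 0 := by
    intro i l
    rw [ht1 K (Q i l), ht0, mul_zero]
  have hT6 : ∀ i l : Fin m, (∑ j, ∑ k, Gi j k * (Q i k * K j l)) = (Q * Jm) i l := by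
    intro i l
    rw [Finset.sum_comm]
    have h1 : ∀ k, (∑ j, Gi j k * (Q i k * K j l)) = Q i k * Jm k l := by
      intro k
      have h2 : (∑ j, Gi j k * (Q i k * K j l)) = Q i k * ∑ j, Gi k j * K j l := by
        rw [Finset.mul_sum]
        exact Finset.sum_congr rfl fun j _ => by rw [egGis j k]; ring
      rw [h2, egGiK k l]
    calc (∑ k, ∑ j, Gi j k * (Q i k * K j l))
        = ∑ k, Q i k * Jm k l := Finset.sum_congr rfl fun k _ => h1 k
      _ = (Q * Jm) i l := (Matrix.mul_apply).symm
  have hT7 : ∀ i l : Fin m, (∑ j, ∑ k, Gi j k * (Q j l * K i k)) = -(P i l) := by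
    intro i l
    have h1 : ∀ j, (∑ k, Gi j k * (Q j l * K i k)) = Q j l * (-(Jm j i)) := by
      intro j
      have h2 : (∑ k, Gi j k * (Q j l * K i k)) = Q j l * ∑ k, K i k * Gi k j := by
        rw [Finset.mul_sum]
        exact Finset.sum_congr rfl fun k _ => by rw [egGis j k]; ring
      rw [h2, egKGi i j]
    calc (∑ j, ∑ k, Gi j k * (Q j l * K i k))
        = ∑ j, -(Jm j i * Q j l) := Finset.sum_congr rfl fun j _ => by rw [h1 j]; ring
      _ = -(∑ j, Jm j i * Q j l) := by rw [Finset.sum_neg_distrib]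
      _ = -(P i l) := by rw [egJTQ i l]
  have hT8 : ∀ i l : Fin m, (∑ j, ∑ k, Gi j k * (Q j k * K i l)) = q * K i l := by
    intro i l
    calc (∑ j, ∑ k, Gi j k * (Q j k * K i l))
        = ∑ j, (∑ k, Gi j k * Q j k) * K i l := by
          refine Finset.sum_congr rfl fun j _ => ?_
          rw [Finset.sum_mul]
          exact Finset.sum_congr rfl fun k _ => by ring
      _ = (∑ j, ∑ k, Gi j k * Q j k) * K i l := (Finset.sum_mul _ _ _).symm
      _ = q * K i l := by rw [← hq]
  -- the contracted identity
  have e1 : ∀ i l : Fin m, ((m:ℝ) - 1) * P i l = p * G i l + (Q * Jm) i l + q * K i l := by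
    intro i l
    have h0 : (∑ j, ∑ k, Gi j k * (P i l * G j k - P i k * G j l + P j l * G i k - P j k * G i l
        + Q i l * K j k - Q i k * K j l + Q j l * K i k - Q j k * K i l)) = 0 := by
      simp [hE]
    have h1 : (∑ j, ∑ k, Gi j k * (P i l * G j k - P i k * G j l + P j l * G i k - P j k * G i l
        + Q i l * K j k - Q i k * K j l + Q j l * K i k - Q j k * K i l))
        = (∑ j, ∑ k, Gi j k * (P i l * G j k)) - (∑ j, ∑ k, Gi j k * (P i k * G j l))
        + (∑ j, ∑ k, Gi j k * (P j l * G i k)) - (∑ j, ∑ k, Gi j k * (P j k * G i l))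
        + (∑ j, ∑ k, Gi j k * (Q i l * K j k)) - (∑ j, ∑ k, Gi j k * (Q i k * K j l))
        + (∑ j, ∑ k, Gi j k * (Q j l * K i k)) - (∑ j, ∑ k, Gi j k * (Q j k * K i l)) := by
      simp only [mul_sub, mul_add, Finset.sum_sub_distrib, Finset.sum_add_distrib]
    rw [h1, hT1, hT2, hT3, hT4, hT5, hT6, hT7, hT8] at h0
    linarith [h0]
  -- symmetrize
  have egKa : ∀ a b, K a b = -(K b a) := by
    intro a b
    have := congrFun (congrFun hKasym a) b
    simp only [Matrix.transpose_apply, Matrix.neg_apply] at this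
    linarith [this]
  have hQJT : (Q * Jm)ᵀ = P := by
    rw [Matrix.transpose_mul, hQsym]
    exact hJTQ
  have egQJP : ∀ a b, (Q * Jm) a b = P b a := by
    intro a b
    have := congrFun (congrFun hQJT b) a
    simpa [Matrix.transpose_apply] using this
  have e2 : ∀ i l : Fin m, ((m:ℝ) - 2) * P i l = p * G i l - q * K i l := by
    intro i l
    have h1 := e1 i l
    have h2 := e1 l i
    rw [egPs l i, egGs l i, egQJP l i, egKa l i] at h2
    rw [egQJP i l] at h1
    linarith [h1, h2]
  -- p = 0
  have hp0 : p = 0 := by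
    have h1 : ((m:ℝ) - 2) * p = p * m - q * 0 := by
      calc ((m:ℝ) - 2) * p = ∑ j, ∑ k, Gi j k * (((m:ℝ) - 2) * P j k) := by
            rw [ht1 P ((m:ℝ) - 2), ← hp]
        _ = ∑ j, ∑ k, Gi j k * (p * G j k - q * K j k) :=
            Finset.sum_congr rfl fun j _ => Finset.sum_congr rfl fun k _ => by rw [e2 j k]
        _ = (∑ j, ∑ k, Gi j k * (p * G j k)) - (∑ j, ∑ k, Gi j k * (q * K j k)) := by
            simp only [mul_sub, Finset.sum_sub_distrib]
        _ = p * (∑ j, ∑ k, Gi j k * G j k) - q * (∑ j, ∑ k, Gi j k * K j k) := by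
            rw [ht1 G p, ht1 K q]
        _ = p * m - q * 0 := by rw [hGiGtr, ht0]
    have hm2 : (4:ℝ) ≤ (m:ℝ) := by exact_mod_cast hm
    linarith [h1]
  have e3 : ∀ i l : Fin m, ((m:ℝ) - 2) * P i l = -(q * K i l) := by
    intro i l
    have := e2 i l
    rw [hp0] at this
    linarith [this]
  -- pass to Q
  have hJTP : Jmᵀ * P = -Q := by
    calc Jmᵀ * P = Jmᵀ * (Jmᵀ * Q) := by rw [hJTQ]
      _ = (Jmᵀ * Jmᵀ) * Q := by rw [Matrix.mul_assoc]
      _ = -Q := by rw [hJT2]; simp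
  have egJTP : ∀ a b, (∑ k, Jm k a * P k b) = -(Q a b) := by
    intro a b
    have := congrFun (congrFun hJTP a) b
    simpa [Matrix.mul_apply, Matrix.transpose_apply, Matrix.neg_apply] using this
  have egJTK : ∀ a b, (∑ k, Jm k a * K k b) = G a b := by
    intro a b
    have := congrFun (congrFun hJTK a) b
    simpa [Matrix.mul_apply, Matrix.transpose_apply] using this
  have e4 : ∀ a b : Fin m, ((m:ℝ) - 2) * Q a b = q * G a b := by
    intro a b
    have h1 : ((m:ℝ) - 2) * (-(Q a b)) = -(q * G a b) := by
      calc ((m:ℝ) - 2) * (-(Q a b)) = ((m:ℝ) - 2) * ∑ k, Jm k a * P k b := by rw [egJTP a b]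
        _ = ∑ k, Jm k a * (((m:ℝ) - 2) * P k b) := by
            rw [Finset.mul_sum]
            exact Finset.sum_congr rfl fun k _ => by ring
        _ = ∑ k, Jm k a * (-(q * K k b)) :=
            Finset.sum_congr rfl fun k _ => by rw [e3 k b]
        _ = -(q * ∑ k, Jm k a * K k b) := by
            rw [Finset.mul_sum, ← Finset.sum_neg_distrib]
            exact Finset.sum_congr rfl fun k _ => by ring
        _ = -(q * G a b) := by rw [egJTK a b]
    linarith [h1]
  -- q = 0
  have hq0 : q = 0 := by
    have h1 : ((m:ℝ) - 2) * q = q * m := by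
      calc ((m:ℝ) - 2) * q = ∑ j, ∑ k, Gi j k * (((m:ℝ) - 2) * Q j k) := by
            rw [ht1 Q ((m:ℝ) - 2), ← hq]
        _ = ∑ j, ∑ k, Gi j k * (q * G j k) :=
            Finset.sum_congr rfl fun j _ => Finset.sum_congr rfl fun k _ => by rw [e4 j k]
        _ = q * (∑ j, ∑ k, Gi j k * G j k) := ht1 G q
        _ = q * m := by rw [hGiGtr]
    linarith [h1]
  -- conclude
  have hm2 : (4:ℝ) ≤ (m:ℝ) := by exact_mod_cast hm
  ext a b
  have h1 := e4 a b
  rw [hq0] at h1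
  have h2 : Q a b = 0 := by
    have h3 : ((m:ℝ) - 2) * Q a b = 0 := by rw [h1]; ring
    rcases mul_eq_zero.mp h3 with h | h
    · exact absurd h (by linarith)
    · exact h
  simpa [hQdef] using h2

private theorem stmt_10_aux {M : Type*} {n : ℕ} (hn : 2 ≤ n)
    (g ginv J : M → Fin (2*n) → Fin (2*n) → ℝ)
    (hg_symm : ∀ x i j, g x i j = g x j i)
    (hginv : ∀ x i j, (∑ α, ginv x i α * g x α j) = if i = j then 1 else 0)
    (hJJ : ∀ x i j, (∑ α, J x i α * J x α j) = -(if i = j then (1:ℝ) else 0))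
    (hherm : ∀ x i j, (∑ α, ∑ β, J x α i * g x α β * J x β j) = g x i j)
    (a : M → Fin (2*n) → Fin (2*n) → ℝ)
    (Dlam : M → Fin (2*n) → Fin (2*n) → ℝ)
    (hDlam_symm : ∀ x i j, Dlam x i j = Dlam x j i)
    (Da2 : M → Fin (2*n) → Fin (2*n) → Fin (2*n) → Fin (2*n) → ℝ)
    (hDa2 : ∀ x i j k l, Da2 x i j k l =
        Dlam x i l * g x j k + Dlam x j l * g x i k
        - (∑ α, J x α i * Dlam x α l) * (∑ α, g x j α * J x α k)
        - (∑ α, J x α j * Dlam x α l) * (∑ α, g x i α * J x α k))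
    (R : M → Fin (2*n) → Fin (2*n) → Fin (2*n) → Fin (2*n) → ℝ)
    (hRic : ∀ x i j k l, Da2 x i j k l - Da2 x i j l k =
        (∑ r, R x r i k l * a x r j) + (∑ r, R x r j k l * a x i r))
    (hRJJ : ∀ x i j k l, (∑ α, ∑ β, R x i j α β * J x α k * J x β l) = R x i j k l) :
    ∀ x i j, (∑ α, J x α i * Dlam x α j) = -∑ α, Dlam x i α * J x α j := by
  intro x
  -- Step 1: the J-invariance of the antisymmetrized second derivative
  have hTJ : ∀ i j k l, (∑ α, ∑ β, (Da2 x i j α β - Da2 x i j β α) * (J x α k * J x β l))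
      = Da2 x i j k l - Da2 x i j l k := by
    intro i j k l
    have hswap : ∀ (S : Fin (2*n) → Fin (2*n) → Fin (2*n) → ℝ) (b : Fin (2*n) → ℝ),
        (∑ α, ∑ β, (∑ r, S r α β * b r) * (J x α k * J x β l))
        = ∑ r, (∑ α, ∑ β, S r α β * J x α k * J x β l) * b r := by
      intro S b
      calc (∑ α, ∑ β, (∑ r, S r α β * b r) * (J x α k * J x β l))
          = ∑ α, ∑ β, ∑ r, (S r α β * J x α k * J x β l) * b r := by
            refine Finset.sum_congr rfl fun α _ => Finset.sum_congr rfl fun β _ => ?_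
            rw [Finset.sum_mul]
            exact Finset.sum_congr rfl fun r _ => by ring
        _ = ∑ α, ∑ r, ∑ β, (S r α β * J x α k * J x β l) * b r :=
            Finset.sum_congr rfl fun α _ => Finset.sum_comm
        _ = ∑ r, ∑ α, ∑ β, (S r α β * J x α k * J x β l) * b r := Finset.sum_comm
        _ = ∑ r, (∑ α, ∑ β, S r α β * J x α k * J x β l) * b r := by
            refine Finset.sum_congr rfl fun r _ => ?_
            rw [Finset.sum_mul]
            refine Finset.sum_congr rfl fun α _ => ?_
            rw [Finset.sum_mul]
    calc (∑ α, ∑ β, (Da2 x i j α β - Da2 x i j β α) * (J x α k * J x β l))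
        = ∑ α, ∑ β, ((∑ r, R x r i α β * a x r j) + (∑ r, R x r j α β * a x i r))
            * (J x α k * J x β l) := by
          refine Finset.sum_congr rfl fun α _ => Finset.sum_congr rfl fun β _ => ?_
          rw [hRic x i j α β]
      _ = (∑ α, ∑ β, (∑ r, R x r i α β * a x r j) * (J x α k * J x β l))
          + (∑ α, ∑ β, (∑ r, R x r j α β * a x i r) * (J x α k * J x β l)) := by
          simp only [add_mul, Finset.sum_add_distrib]
      _ = (∑ r, (∑ α, ∑ β, R x r i α β * J x α k * J x β l) * a x r j)
          + (∑ r, (∑ α, ∑ β, R x r j α β * J x α k * J x β l) * a x i r) := by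
          rw [hswap (fun r α β => R x r i α β) (fun r => a x r j),
            hswap (fun r α β => R x r j α β) (fun r => a x i r)]
      _ = (∑ r, R x r i k l * a x r j) + (∑ r, R x r j k l * a x i r) := by
          simp only [hRJJ]
      _ = Da2 x i j k l - Da2 x i j l k := (hRic x i j k l).symm
  -- auxiliary scalar identities
  have hfac : ∀ (u v : Fin (2*n) → ℝ),
      (∑ α, ∑ β, u α * v β) = (∑ α, u α) * (∑ β, v β) :=
    fun u v => (Finset.sum_mul_sum Finset.univ Finset.univ u v).symm
  have hKJ : ∀ j k, (∑ α, (∑ γ, g x j γ * J x γ α) * J x α k) = -(g x j k) := by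
    intro j k
    calc (∑ α, (∑ γ, g x j γ * J x γ α) * J x α k)
        = ∑ α, ∑ γ, g x j γ * (J x γ α * J x α k) := by
          refine Finset.sum_congr rfl fun α _ => ?_
          rw [Finset.sum_mul]
          exact Finset.sum_congr rfl fun γ _ => by ring
      _ = ∑ γ, ∑ α, g x j γ * (J x γ α * J x α k) := Finset.sum_comm
      _ = ∑ γ, g x j γ * ∑ α, J x γ α * J x α k :=
          Finset.sum_congr rfl fun γ _ => (Finset.mul_sum _ _ _).symm
      _ = ∑ γ, g x j γ * (-(if γ = k then (1:ℝ) else 0)) :=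
          Finset.sum_congr rfl fun γ _ => by rw [hJJ x γ k]
      _ = -(g x j k) := by simp
  -- Step 2: the pointwise tensor identity E = 0
  have hEs : ∀ i j k l,
      ((∑ β, (∑ γ, J x γ i * Dlam x γ β) * J x β l) - Dlam x i l) * g x j k
    - ((∑ β, (∑ γ, J x γ i * Dlam x γ β) * J x β k) - Dlam x i k) * g x j l
    + ((∑ β, (∑ γ, J x γ j * Dlam x γ β) * J x β l) - Dlam x j l) * g x i k
    - ((∑ β, (∑ γ, J x γ j * Dlam x γ β) * J x β k) - Dlam x j k) * g x i l
    + ((∑ α, Dlam x i α * J x α l) + (∑ α, J x α i * Dlam x α l)) * (∑ α, g x j α * J x α k)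
    - ((∑ α, Dlam x i α * J x α k) + (∑ α, J x α i * Dlam x α k)) * (∑ α, g x j α * J x α l)
    + ((∑ α, Dlam x j α * J x α l) + (∑ α, J x α j * Dlam x α l)) * (∑ α, g x i α * J x α k)
    - ((∑ α, Dlam x j α * J x α k) + (∑ α, J x α j * Dlam x α k)) * (∑ α, g x i α * J x α l)
      = 0 := by
    intro i j k l
    have hTexp : ∀ k' l', Da2 x i j k' l' - Da2 x i j l' k' =
        Dlam x i l' * g x j k' + Dlam x j l' * g x i k'
        - (∑ γ, J x γ i * Dlam x γ l') * (∑ γ, g x j γ * J x γ k')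
        - (∑ γ, J x γ j * Dlam x γ l') * (∑ γ, g x i γ * J x γ k')
        - (Dlam x i k' * g x j l' + Dlam x j k' * g x i l'
          - (∑ γ, J x γ i * Dlam x γ k') * (∑ γ, g x j γ * J x γ l')
          - (∑ γ, J x γ j * Dlam x γ k') * (∑ γ, g x i γ * J x γ l')) := by
      intro k' l'
      rw [hDa2 x i j k' l', hDa2 x i j l' k']
    have h2 : (∑ α, ∑ β,
        (Dlam x i β * g x j α + Dlam x j β * g x i α
          - (∑ γ, J x γ i * Dlam x γ β) * (∑ γ, g x j γ * J x γ α)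
          - (∑ γ, J x γ j * Dlam x γ β) * (∑ γ, g x i γ * J x γ α)
          - (Dlam x i α * g x j β + Dlam x j α * g x i β
            - (∑ γ, J x γ i * Dlam x γ α) * (∑ γ, g x j γ * J x γ β)
            - (∑ γ, J x γ j * Dlam x γ α) * (∑ γ, g x i γ * J x γ β)))
        * (J x α k * J x β l)) = Da2 x i j k l - Da2 x i j l k := by
      rw [← hTJ i j k l]
      exact Finset.sum_congr rfl fun α _ => Finset.sum_congr rfl fun β _ =>
        congrArg (fun t => t * (J x α k * J x β l)) (hTexp α β).symm
    -- factor the left-hand side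
    have hL : (∑ α, ∑ β,
        (Dlam x i β * g x j α + Dlam x j β * g x i α
          - (∑ γ, J x γ i * Dlam x γ β) * (∑ γ, g x j γ * J x γ α)
          - (∑ γ, J x γ j * Dlam x γ β) * (∑ γ, g x i γ * J x γ α)
          - (Dlam x i α * g x j β + Dlam x j α * g x i β
            - (∑ γ, J x γ i * Dlam x γ α) * (∑ γ, g x j γ * J x γ β)
            - (∑ γ, J x γ j * Dlam x γ α) * (∑ γ, g x i γ * J x γ β)))
        * (J x α k * J x β l))
        = (∑ α, g x j α * J x α k) * (∑ β, Dlam x i β * J x β l)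
        + (∑ α, g x i α * J x α k) * (∑ β, Dlam x j β * J x β l)
        - (-(g x j k)) * (∑ β, (∑ γ, J x γ i * Dlam x γ β) * J x β l)
        - (-(g x i k)) * (∑ β, (∑ γ, J x γ j * Dlam x γ β) * J x β l)
        - (∑ α, Dlam x i α * J x α k) * (∑ β, g x j β * J x β l)
        - (∑ α, Dlam x j α * J x α k) * (∑ β, g x i β * J x β l)
        + (∑ α, (∑ γ, J x γ i * Dlam x γ α) * J x α k) * (-(g x j l))
        + (∑ α, (∑ γ, J x γ j * Dlam x γ α) * J x α k) * (-(g x i l)) := by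
      calc (∑ α, ∑ β,
          (Dlam x i β * g x j α + Dlam x j β * g x i α
            - (∑ γ, J x γ i * Dlam x γ β) * (∑ γ, g x j γ * J x γ α)
            - (∑ γ, J x γ j * Dlam x γ β) * (∑ γ, g x i γ * J x γ α)
            - (Dlam x i α * g x j β + Dlam x j α * g x i β
              - (∑ γ, J x γ i * Dlam x γ α) * (∑ γ, g x j γ * J x γ β)
              - (∑ γ, J x γ j * Dlam x γ α) * (∑ γ, g x i γ * J x γ β)))
          * (J x α k * J x β l))
          = ∑ α, ∑ β,
            ((g x j α * J x α k) * (Dlam x i β * J x β l)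
            + (g x i α * J x α k) * (Dlam x j β * J x β l)
            - ((∑ γ, g x j γ * J x γ α) * J x α k) * ((∑ γ, J x γ i * Dlam x γ β) * J x β l)
            - ((∑ γ, g x i γ * J x γ α) * J x α k) * ((∑ γ, J x γ j * Dlam x γ β) * J x β l)
            - (Dlam x i α * J x α k) * (g x j β * J x β l)
            - (Dlam x j α * J x α k) * (g x i β * J x β l)
            + ((∑ γ, J x γ i * Dlam x γ α) * J x α k) * ((∑ γ, g x j γ * J x γ β) * J x β l)
            + ((∑ γ, J x γ j * Dlam x γ α) * J x α k) * ((∑ γ, g x i γ * J x γ β) * J x β l)) :=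
            Finset.sum_congr rfl fun α _ => Finset.sum_congr rfl fun β _ => by ring
        _ = _ := by
            simp only [Finset.sum_add_distrib, Finset.sum_sub_distrib]
            rw [hfac, hfac, hfac, hfac, hfac, hfac, hfac, hfac]
            rw [hKJ j k, hKJ i k, hKJ j l, hKJ i l]
    rw [hL] at h2
    rw [hDa2 x i j k l, hDa2 x i j l k] at h2
    linear_combination h2
  -- Step 3: apply the matrix lemma
  have hm : 4 ≤ 2*n := by omega
  have hkey := key_aux hm (Matrix.of (g x)) (Matrix.of (ginv x)) (Matrix.of (J x))
    (Matrix.of (Dlam x))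
    (by ext i j
        simp only [Matrix.transpose_apply, Matrix.of_apply]
        exact hg_symm x j i)
    (by ext i j
        simp only [Matrix.mul_apply, Matrix.one_apply, Matrix.of_apply]
        exact hginv x i j)
    (by ext i j
        simp only [Matrix.mul_apply, Matrix.neg_apply, Matrix.one_apply, Matrix.of_apply]
        exact hJJ x i j)
    (by ext i j
        simp only [Matrix.mul_apply, Matrix.transpose_apply, Matrix.of_apply]
        rw [← hherm x i j]
        rw [Finset.sum_comm]
        refine Finset.sum_congr rfl fun β _ => ?_
        rw [Finset.sum_mul])
    (by ext i j
        simp only [Matrix.transpose_apply, Matrix.of_apply]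
        exact hDlam_symm x j i)
    (by intro i j k l
        have h := hEs i j k l
        simp only [Matrix.sub_apply, Matrix.add_apply, Matrix.mul_apply,
          Matrix.transpose_apply, Matrix.of_apply]
        linear_combination h)
  intro i j
  have h := congrFun (congrFun hkey i) j
  simp only [Matrix.add_apply, Matrix.mul_apply, Matrix.transpose_apply, Matrix.of_apply,
    Matrix.zero_apply] at h
  linarith [h]

/-- On a Kähler manifold of dimension `2n ≥ 4`, for a solution `(a_{ij}, λ_i)` of the
h-projective equation, the covariant Hessian `λ_{i,j}` anticommutes with `J`:
`J^α_i λ_{α,j} = −λ_{i,α} J^α_j`. -/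
theorem stmt_10 {M : Type*} {n : ℕ} (hn : 2 ≤ n)
    (g ginv J : M → Fin (2*n) → Fin (2*n) → ℝ)
    (hg_symm : ∀ x i j, g x i j = g x j i)
    (hginv : ∀ x i j, (∑ α, ginv x i α * g x α j) = if i = j then 1 else 0)
    (hJJ : ∀ x i j, (∑ α, J x i α * J x α j) = -(if i = j then (1:ℝ) else 0))
    (hherm : ∀ x i j, (∑ α, ∑ β, J x α i * g x α β * J x β j) = g x i j)
    (a : M → Fin (2*n) → Fin (2*n) → ℝ) (lam : M → Fin (2*n) → ℝ)
    (ha_symm : ∀ x i j, a x i j = a x j i)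
    (ha_herm : ∀ x i j, (∑ α, ∑ β, J x α i * a x α β * J x β j) = a x i j)
    -- `Da x i j k = a_{ij,k}` satisfies the h-projective equation
    (Da : M → Fin (2*n) → Fin (2*n) → Fin (2*n) → ℝ)
    (hhpr : ∀ x i j k, Da x i j k =
        lam x i * g x j k + lam x j * g x i k
        - (∑ α, J x α i * lam x α) * (∑ α, g x j α * J x α k)
        - (∑ α, J x α j * lam x α) * (∑ α, g x i α * J x α k))
    -- `Dlam x i j = λ_{i,j}` and `Da2 x i j k l = a_{ij,kl}`; differentiating the
    -- h-projective equation (with `g` and `J` parallel) gives: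
    (Dlam : M → Fin (2*n) → Fin (2*n) → ℝ)
    (hDlam_symm : ∀ x i j, Dlam x i j = Dlam x j i)
    (Da2 : M → Fin (2*n) → Fin (2*n) → Fin (2*n) → Fin (2*n) → ℝ)
    (hDa2 : ∀ x i j k l, Da2 x i j k l =
        Dlam x i l * g x j k + Dlam x j l * g x i k
        - (∑ α, J x α i * Dlam x α l) * (∑ α, g x j α * J x α k)
        - (∑ α, J x α j * Dlam x α l) * (∑ α, g x i α * J x α k))
    -- the Ricci identity with the curvature tensor `R^i_{jkl}`
    (R : M → Fin (2*n) → Fin (2*n) → Fin (2*n) → Fin (2*n) → ℝ)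
    (hRic : ∀ x i j k l, Da2 x i j k l - Da2 x i j l k =
        (∑ r, R x r i k l * a x r j) + (∑ r, R x r j k l * a x i r))
    -- curvature symmetries of a Kähler metric
    (hRJ : ∀ x i j k l, (∑ α, R x i α k l * J x α j) = ∑ α, J x i α * R x α j k l)
    (hRJJ : ∀ x i j k l, (∑ α, ∑ β, R x i j α β * J x α k * J x β l) = R x i j k l) :
    ∀ x i j, (∑ α, J x α i * Dlam x α j) = -∑ α, Dlam x i α * J x α j := by
  exact stmt_10_aux hn g ginv J hg_symm hginv hJJ hherm a Dlam hDlam_symm Da2 hDa2 R hRic hRJJ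
end

section
/- Let (M^{2n}, g, J) be a Kähler manifold of dimension 2n ≥ 4 and let (a_{ij}, λ_i) solve the h-projective equation a_{ij,k} = λ_i g_{jk} + λ_j g_{ik} − λ̄_i J_{jk} − λ̄_j J_{ik}. Then the vector field λ̄^i = g^{iα} J^β_α λ_β is a Killing vector field for g. -/
/-!
Work pointwise, viewing a 4-tensor `T_{ijkl}` as a matrix `T i j` in its last two indices, so that
`J`-rotation in `k, l` is `T i j ↦ Jᵀ * T i j * J`. Since the curvature is `J`-invariant in its
last two slots, the Ricci identity makes `a_{ij,kl} - a_{ij,lk}` `J`-invariant as well. Substituting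
the derivative of the h-projective equation and contracting with `g^{kj}` turns this invariance
into `τ S + (N - 2) S J = 0`, where `Λ = (λ_{i,j})`, `S = Jᵀ Λ + Λ J`, `τ = tr J` and `N = 2n`.
Multiplying by `J` gives `(τ² + (N - 2)²) S = 0`, so `S = 0` as `N ≠ 2`; by symmetry of `Λ` this
is the Killing equation for `λ̄`.
-/

open Matrix

lemma smul_add_smul_mul_eq_zero {A : Type*} [Ring A] [Algebra ℝ A] {J S : A} {a b : ℝ}
    (hJ : J * J = -1) (hb : b ≠ 0) (h : a • S + b • (S * J) = 0) : S = 0 := by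
  have hJ' : a • (S * J) - b • S = 0 := by
    have := congrArg (· * J) h
    simpa only [add_mul, smul_mul_assoc, mul_assoc, hJ, mul_neg, mul_one, smul_neg, zero_mul,
      ← sub_eq_add_neg] using this
  have hsum : (a ^ 2 + b ^ 2) • S = 0 := by
    linear_combination (norm := module) a • h - b • hJ'
  exact (smul_eq_zero.mp hsum).resolve_left (by positivity)

namespace HProjective

variable {m : Type*}

def symProd (P Q : Matrix m m ℝ) (i j : m) : Matrix m m ℝ :=
  Matrix.of fun k l => P i l * Q j k + P j l * Q i k

@[simp] lemma symProd_apply (P Q : Matrix m m ℝ) (i j k l : m) :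
    symProd P Q i j k l = P i l * Q j k + P j l * Q i k := rfl

def swapLast : (m → m → Matrix m m ℝ) →ₗ[ℝ] (m → m → Matrix m m ℝ) where
  toFun T i j := (T i j)ᵀ
  map_add' _ _ := rfl
  map_smul' _ _ := rfl

@[simp] lemma swapLast_apply (T : m → m → Matrix m m ℝ) (i j : m) :
    swapLast T i j = (T i j)ᵀ := rfl

variable [Fintype m]

def rotate (J : Matrix m m ℝ) : (m → m → Matrix m m ℝ) →ₗ[ℝ] (m → m → Matrix m m ℝ) where
  toFun T i j := Jᵀ * T i j * J
  map_add' _ _ := by ext; simp only [Pi.add_apply, Matrix.mul_add, Matrix.add_mul]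
  map_smul' _ _ := by
    ext; simp only [Pi.smul_apply, Matrix.mul_smul, Matrix.smul_mul, RingHom.id_apply]

@[simp] lemma rotate_apply (J : Matrix m m ℝ) (T : m → m → Matrix m m ℝ) (i j : m) :
    rotate J T i j = Jᵀ * T i j * J := rfl

lemma rotate_apply_apply (J : Matrix m m ℝ) (T : m → m → Matrix m m ℝ) (i j k l : m) :
    rotate J T i j k l = ∑ α, ∑ β, T i j α β * J α k * J β l := by
  simp only [rotate_apply, mul_apply, transpose_apply, Finset.sum_mul]
  rw [Finset.sum_comm]
  exact Finset.sum_congr rfl fun _ _ => Finset.sum_congr rfl fun _ _ => by ring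

lemma rotate_swapLast (J : Matrix m m ℝ) (T : m → m → Matrix m m ℝ) :
    rotate J (swapLast T) = swapLast (rotate J T) := by
  ext i j : 2
  simp only [rotate_apply, swapLast_apply, transpose_mul, transpose_transpose, Matrix.mul_assoc]

lemma rotate_symProd (J P Q : Matrix m m ℝ) :
    rotate J (symProd P Q) = symProd (P * J) (Q * J) := by
  ext i j k l
  simp only [rotate_apply_apply, symProd_apply, mul_apply, Finset.sum_mul_sum,
    ← Finset.sum_add_distrib]
  rw [Finset.sum_comm]
  exact Finset.sum_congr rfl fun _ _ => Finset.sum_congr rfl fun _ _ => by ring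

def contract (Gi : Matrix m m ℝ) : (m → m → Matrix m m ℝ) →ₗ[ℝ] Matrix m m ℝ where
  toFun T := Matrix.of fun i l => ∑ k, ∑ j, Gi k j * T i j k l
  map_add' _ _ := by
    ext; simp only [of_apply, Pi.add_apply, Matrix.add_apply, mul_add, Finset.sum_add_distrib]
  map_smul' _ _ := by
    ext
    simp only [of_apply, Pi.smul_apply, Matrix.smul_apply, smul_eq_mul, Finset.mul_sum,
      RingHom.id_apply, mul_left_comm]

@[simp] lemma contract_apply (Gi : Matrix m m ℝ) (T : m → m → Matrix m m ℝ) (i l : m) :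
    contract Gi T i l = ∑ k, ∑ j, Gi k j * T i j k l := rfl

lemma contract_symProd (Gi P Q : Matrix m m ℝ) :
    contract Gi (symProd P Q) = (Gi * Q).trace • P + Q * (Gi * P) := by
  ext i l
  simp only [contract_apply, symProd_apply, Matrix.add_apply, Matrix.smul_apply, smul_eq_mul,
    trace, diag, mul_apply, Finset.sum_mul, Finset.mul_sum, ← Finset.sum_add_distrib]
  exact Finset.sum_congr rfl fun _ _ => Finset.sum_congr rfl fun _ _ => by ring

lemma contract_swapLast_symProd (Gi P Q : Matrix m m ℝ) :
    contract Gi (swapLast (symProd P Q)) = P * (Gi * Q) + (Gi * P).trace • Q := by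
  ext i l
  simp only [contract_apply, swapLast_apply, transpose_apply, symProd_apply, Matrix.add_apply,
    Matrix.smul_apply, smul_eq_mul, trace, diag, mul_apply, Finset.sum_mul, Finset.mul_sum,
    ← Finset.sum_add_distrib]
  exact Finset.sum_congr rfl fun _ _ => Finset.sum_congr rfl fun _ _ => by ring

/-- `R^r_{ikl} a_{rj} + R^r_{jkl} a_{ir}`, with `R r i = R^r_i` as a matrix in `k, l`. -/
def curvatureAction (R : m → m → Matrix m m ℝ) (a : Matrix m m ℝ) : m → m → Matrix m m ℝ :=
  fun i j => ∑ r, a r j • R r i + ∑ r, a i r • R r j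

lemma rotate_curvatureAction {J : Matrix m m ℝ} {R : m → m → Matrix m m ℝ} (hR : rotate J R = R)
    (a : Matrix m m ℝ) : rotate J (curvatureAction R a) = curvatureAction R a := by
  have hR' (r i : m) : Jᵀ * R r i * J = R r i := congrFun (congrFun hR r) i
  ext i j : 2
  simp only [rotate_apply, curvatureAction, Matrix.mul_add, Matrix.add_mul, Matrix.mul_sum,
    Matrix.sum_mul, Matrix.mul_smul, Matrix.smul_mul, hR']

/-- `a_{ij,kl}` for a solution of the h-projective equation, with `L = (λ_{i,j})`. -/
def hprojTensor (G J L : Matrix m m ℝ) : m → m → Matrix m m ℝ :=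
  symProd L G - symProd (Jᵀ * L) (G * J)

variable [DecidableEq m]

lemma trace_smul_add_smul_mul_eq_zero_of_rotate_eq {G Gi J L : Matrix m m ℝ}
    (hGi : Gi * G = 1) (hJ : J * J = -1) (hGJ : Jᵀ * G * J = G)
    (h : rotate J (hprojTensor G J L - swapLast (hprojTensor G J L))
      = hprojTensor G J L - swapLast (hprojTensor G J L)) :
    J.trace • (Jᵀ * L + L * J) + ((Fintype.card m : ℝ) - 2) • ((Jᵀ * L + L * J) * J) = 0 := by
  replace h := congrArg (contract Gi) h
  simp only [hprojTensor, map_sub, rotate_swapLast, rotate_symProd, contract_symProd,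
    contract_swapLast_symProd] at h
  have hGGi : G * Gi = 1 := mul_eq_one_comm.mp hGi
  have hGiG_mul (X : Matrix m m ℝ) : Gi * (G * X) = X := by
    rw [← Matrix.mul_assoc, hGi, Matrix.one_mul]
  have hGGi_mul (X : Matrix m m ℝ) : G * (Gi * X) = X := by
    rw [← Matrix.mul_assoc, hGGi, Matrix.one_mul]
  have hGJ' : G * J = -(Jᵀ * G) := by
    conv_lhs => rw [← hGJ]
    rw [Matrix.mul_assoc _ J J, hJ, Matrix.mul_neg, Matrix.mul_one]
  have hJGi_mul (X : Matrix m m ℝ) : J * (Gi * X) = -(Gi * (Jᵀ * X)) := by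
    rw [← hGiG_mul (J * (Gi * X)), ← Matrix.mul_assoc G, hGJ', Matrix.neg_mul, Matrix.mul_assoc,
      ← Matrix.mul_assoc G, hGGi, Matrix.one_mul, Matrix.mul_neg]
  have hJtJt_mul (X : Matrix m m ℝ) : Jᵀ * (Jᵀ * X) = -X := by
    rw [← Matrix.mul_assoc, ← transpose_mul, hJ, transpose_neg, transpose_one, Matrix.neg_mul,
      Matrix.one_mul]
  have htr : (Gi * (L * J)).trace = -(Gi * (Jᵀ * L)).trace := by
    rw [← Matrix.mul_assoc, trace_mul_comm, hJGi_mul, trace_neg]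
  have htr' : (Gi * (Jᵀ * (L * J))).trace = (Gi * L).trace := by
    rw [← Matrix.mul_assoc Jᵀ, ← Matrix.mul_assoc, trace_mul_comm, hJGi_mul, hJtJt_mul,
      Matrix.mul_neg, neg_neg]
  simp only [Matrix.mul_assoc, hGi, hGiG_mul, hGGi_mul, hJGi_mul, hJtJt_mul, hJ, htr, htr',
    Matrix.mul_neg, Matrix.mul_one, Matrix.neg_mul, trace_neg, trace_one, neg_neg] at h
  simp only [Matrix.add_mul, Matrix.mul_assoc, hJ, Matrix.mul_neg, Matrix.mul_one]
  linear_combination (norm := module) h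

end HProjective

open HProjective

theorem stmt_11_general {M : Type*} {n : ℕ} (hn : 2 ≤ n)
    (g ginv J : M → Fin (2*n) → Fin (2*n) → ℝ)
    (hginv : ∀ x i j, (∑ α, ginv x i α * g x α j) = if i = j then 1 else 0)
    (hJJ : ∀ x i j, (∑ α, J x i α * J x α j) = -(if i = j then (1:ℝ) else 0))
    (hherm : ∀ x i j, (∑ α, ∑ β, J x α i * g x α β * J x β j) = g x i j)
    (a : M → Fin (2*n) → Fin (2*n) → ℝ)
    (Dlam : M → Fin (2*n) → Fin (2*n) → ℝ)
    (hDlam_symm : ∀ x i j, Dlam x i j = Dlam x j i)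
    (Da2 : M → Fin (2*n) → Fin (2*n) → Fin (2*n) → Fin (2*n) → ℝ)
    (hDa2 : ∀ x i j k l, Da2 x i j k l =
        Dlam x i l * g x j k + Dlam x j l * g x i k
        - (∑ α, J x α i * Dlam x α l) * (∑ α, g x j α * J x α k)
        - (∑ α, J x α j * Dlam x α l) * (∑ α, g x i α * J x α k))
    (R : M → Fin (2*n) → Fin (2*n) → Fin (2*n) → Fin (2*n) → ℝ)
    (hRic : ∀ x i j k l, Da2 x i j k l - Da2 x i j l k =
        (∑ r, R x r i k l * a x r j) + (∑ r, R x r j k l * a x i r))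
    (hRJJ : ∀ x i j k l, (∑ α, ∑ β, R x i j α β * J x α k * J x β l) = R x i j k l) :
    ∀ x i j, (∑ α, J x α i * Dlam x α j) + (∑ α, J x α j * Dlam x α i) = 0 := by
  intro x i j
  set G : Matrix (Fin (2*n)) (Fin (2*n)) ℝ := of (g x)
  set Jm : Matrix (Fin (2*n)) (Fin (2*n)) ℝ := of (J x)
  set L : Matrix (Fin (2*n)) (Fin (2*n)) ℝ := of (Dlam x)
  set T : Fin (2*n) → Fin (2*n) → Matrix (Fin (2*n)) (Fin (2*n)) ℝ := fun p q => of (Da2 x p q)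
  set Rx : Fin (2*n) → Fin (2*n) → Matrix (Fin (2*n)) (Fin (2*n)) ℝ := fun r p => of (R x r p)
  have hGi : of (ginv x) * G = 1 := by
    ext p q; simpa only [G, mul_apply, of_apply, one_apply] using hginv x p q
  have hJ : Jm * Jm = -1 := by
    ext p q; simpa only [Jm, mul_apply, of_apply, Matrix.neg_apply, one_apply] using hJJ x p q
  have hGJ : Jmᵀ * G * Jm = G := by
    ext p q
    rw [show G p q = g x p q from rfl, ← hherm x p q]
    simp only [G, Jm, mul_apply, of_apply, transpose_apply, Finset.sum_mul]
    exact Finset.sum_comm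
  have hDa2' : T = hprojTensor G Jm L := by
    ext p q k l
    simp only [T, hDa2, hprojTensor, G, Jm, L, Pi.sub_apply, Matrix.sub_apply, symProd_apply,
      mul_apply, of_apply, transpose_apply]
    ring
  have hRic' : T - swapLast T = curvatureAction Rx (of (a x)) := by
    ext p q k l
    simp only [T, Rx, hRic, curvatureAction, Pi.sub_apply, Matrix.sub_apply, swapLast_apply,
      transpose_apply, of_apply, Matrix.add_apply, Matrix.sum_apply, Matrix.smul_apply,
      smul_eq_mul, mul_comm]
  have hR : rotate Jm Rx = Rx := by
    ext r p k l; rw [rotate_apply_apply]; exact hRJJ x r p k l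
  have hcard : (Fintype.card (Fin (2*n)) : ℝ) - 2 ≠ 0 := by
    rw [Fintype.card_fin, sub_ne_zero]; norm_cast; omega
  have hS : Jmᵀ * L + L * Jm = 0 :=
    smul_add_smul_mul_eq_zero hJ hcard (trace_smul_add_smul_mul_eq_zero_of_rotate_eq hGi hJ hGJ
      (by rw [← hDa2', hRic', rotate_curvatureAction hR]))
  simpa [Jm, L, mul_apply, hDlam_symm x _ i, mul_comm] using congrFun (congrFun hS i) j

/-- On a Kähler manifold of dimension `2n ≥ 4`, for a solution `(a_{ij}, λ_i)` of the
h-projective equation, the vector field `λ̄^i = g^{iα} J^β_α λ_β` is a Killing vector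
field for `g`; in the lowered form (using that `J` is parallel, so
`λ̄_{i,j} = J^α_i λ_{α,j}`) this reads `λ̄_{i,j} + λ̄_{j,i} = 0`. -/
theorem stmt_11 {M : Type*} {n : ℕ} (hn : 2 ≤ n)
    (g ginv J : M → Fin (2*n) → Fin (2*n) → ℝ)
    (hg_symm : ∀ x i j, g x i j = g x j i)
    (hginv : ∀ x i j, (∑ α, ginv x i α * g x α j) = if i = j then 1 else 0)
    (hJJ : ∀ x i j, (∑ α, J x i α * J x α j) = -(if i = j then (1:ℝ) else 0))
    (hherm : ∀ x i j, (∑ α, ∑ β, J x α i * g x α β * J x β j) = g x i j)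
    (a : M → Fin (2*n) → Fin (2*n) → ℝ) (lam : M → Fin (2*n) → ℝ)
    (ha_symm : ∀ x i j, a x i j = a x j i)
    (ha_herm : ∀ x i j, (∑ α, ∑ β, J x α i * a x α β * J x β j) = a x i j)
    (Da : M → Fin (2*n) → Fin (2*n) → Fin (2*n) → ℝ)
    (hhpr : ∀ x i j k, Da x i j k =
        lam x i * g x j k + lam x j * g x i k
        - (∑ α, J x α i * lam x α) * (∑ α, g x j α * J x α k)
        - (∑ α, J x α j * lam x α) * (∑ α, g x i α * J x α k))
    (Dlam : M → Fin (2*n) → Fin (2*n) → ℝ)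
    (hDlam_symm : ∀ x i j, Dlam x i j = Dlam x j i)
    (Da2 : M → Fin (2*n) → Fin (2*n) → Fin (2*n) → Fin (2*n) → ℝ)
    (hDa2 : ∀ x i j k l, Da2 x i j k l =
        Dlam x i l * g x j k + Dlam x j l * g x i k
        - (∑ α, J x α i * Dlam x α l) * (∑ α, g x j α * J x α k)
        - (∑ α, J x α j * Dlam x α l) * (∑ α, g x i α * J x α k))
    (R : M → Fin (2*n) → Fin (2*n) → Fin (2*n) → Fin (2*n) → ℝ)
    (hRic : ∀ x i j k l, Da2 x i j k l - Da2 x i j l k =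
        (∑ r, R x r i k l * a x r j) + (∑ r, R x r j k l * a x i r))
    (hRJ : ∀ x i j k l, (∑ α, R x i α k l * J x α j) = ∑ α, J x i α * R x α j k l)
    (hRJJ : ∀ x i j k l, (∑ α, ∑ β, R x i j α β * J x α k * J x β l) = R x i j k l) :
    ∀ x i j, (∑ α, J x α i * Dlam x α j) + (∑ α, J x α j * Dlam x α i) = 0 :=
  stmt_11_general hn g ginv J hginv hJJ hherm a Dlam hDlam_symm Da2 hDa2 R hRic hRJJ
end

section
/- Let (M^{2n}, g) be a pseudo-Riemannian manifold and f a smooth function satisfying Tanno's equation f_{,ijk} = B(2f_{,k} g_{ij} + f_{,i} g_{jk} + f_{,j} g_{ik} − f̄_{,i} J_{jk} − f̄_{,j} J_{ik}) for a nonzero constant B on a Kähler manifold (M, g, J). Then the triple (a_{ij}, λ_i, μ) defined by a_{ij} = (1/B) f_{,ij} − 2 f g_{ij}, λ_i = f_{,i}, μ = 2Bf satisfies the extended system: a_{ij,k} = λ_i g_{jk} + λ_j g_{ik} − λ̄_i J_{jk} − λ̄_j J_{ik}, λ_{i,j} = μ g_{ij} + B a_{ij}, and μ_{,i} = 2Bλ_i.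 -/
/-- If `f` satisfies Tanno's equation
`f_{,ijk} = B(2f_{,k} g_{ij} + f_{,i} g_{jk} + f_{,j} g_{ik} − f̄_{,i} J_{jk} − f̄_{,j} J_{ik})`
with `B ≠ 0` on a Kähler manifold, then `a_{ij} = (1/B) f_{,ij} − 2 f g_{ij}`,
`λ_i = f_{,i}`, `μ = 2Bf` satisfy the extended system. -/
theorem stmt_15 {M : Type*} {n : ℕ} (hn : 2 ≤ n)
    (g ginv J : M → Fin (2*n) → Fin (2*n) → ℝ)
    (hg_symm : ∀ x i j, g x i j = g x j i)
    (hginv : ∀ x i j, (∑ α, ginv x i α * g x α j) = if i = j then 1 else 0)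
    (hJJ : ∀ x i j, (∑ α, J x i α * J x α j) = -(if i = j then (1:ℝ) else 0))
    (hherm : ∀ x i j, (∑ α, ∑ β, J x α i * g x α β * J x β j) = g x i j)
    (B : ℝ) (hB : B ≠ 0) (f : M → ℝ)
    -- covariant derivative operators on functions, 1-forms and (0,2)-tensors
    (D0 : (M → ℝ) → M → Fin (2*n) → ℝ)
    (D1 : (M → Fin (2*n) → ℝ) → M → Fin (2*n) → Fin (2*n) → ℝ)
    (D2 : (M → Fin (2*n) → Fin (2*n) → ℝ) → M → Fin (2*n) → Fin (2*n) → Fin (2*n) → ℝ)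
    -- structural properties of the covariant derivative:
    (hD0_lin : ∀ (h : M → ℝ) (c : ℝ), D0 (fun y => c * h y) = fun x i => c * D0 h x i)
    (hD2_lin : ∀ (T S : M → Fin (2*n) → Fin (2*n) → ℝ) (c₁ c₂ : ℝ),
        D2 (fun y i j => c₁ * T y i j + c₂ * S y i j)
          = fun x i j k => c₁ * D2 T x i j k + c₂ * D2 S x i j k)
    (hD2_fg : ∀ h : M → ℝ, D2 (fun y i j => h y * g y i j)
        = fun x i j k => D0 h x k * g x i j)
    -- Tanno's equation for `f`:
    (htanno : ∀ x i j k, D2 (D1 (D0 f)) x i j k =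
        B * (2 * D0 f x k * g x i j + D0 f x i * g x j k + D0 f x j * g x i k
          - (∑ α, J x α i * D0 f x α) * (∑ α, g x j α * J x α k)
          - (∑ α, J x α j * D0 f x α) * (∑ α, g x i α * J x α k))) :
    (∀ x i j k,
      D2 (fun y i j => (1/B) * D1 (D0 f) y i j - 2 * f y * g y i j) x i j k
        = D0 f x i * g x j k + D0 f x j * g x i k
          - (∑ α, J x α i * D0 f x α) * (∑ α, g x j α * J x α k)
          - (∑ α, J x α j * D0 f x α) * (∑ α, g x i α * J x α k)) ∧
    (∀ x i j, D1 (D0 f) x i j =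
      (2 * B * f x) * g x i j
        + B * ((1/B) * D1 (D0 f) x i j - 2 * f x * g x i j)) ∧
    (∀ x i, D0 (fun y => 2 * B * f y) x i = 2 * B * D0 f x i) := by
  refine ⟨?_, ?_, ?_⟩
  · intro x i j k
    have key : (fun y i j => (1/B) * D1 (D0 f) y i j - 2 * f y * g y i j)
        = (fun y i j => (1/B) * D1 (D0 f) y i j + (-2) * (f y * g y i j)) := by
      funext y i j; ring
    rw [key, hD2_lin (D1 (D0 f)) (fun y i j => f y * g y i j) (1/B) (-2),
      hD2_fg f]
    simp only []
    rw [htanno x i j k]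
    field_simp
    ring
  · intro x i j
    field_simp
    ring
  · intro x i
    have := hD0_lin (fun y => B * f y) 2
    have h2 := hD0_lin f B
    have : (fun y => 2 * B * f y) = (fun y => (2*B) * f y) := by funext y; ring
    rw [this, hD0_lin f (2*B)]
end
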